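/- Let (λ_n)_{n∈ℕ} be a sequence of nonzero real numbers satisfying a Weyl-type counting bound of order m. Then for every complex number z with Re z > m/2, the function t ↦ Σ_n (sgn(λ_n)/2)·erfc(|λ_n|·√t) is integrable against t^{z−1} dt on (0,∞), and ∫₀^∞ (Σ_n (sgn(λ_n)/2)·erfc(|λ_n|·√t))·t^{z−1} dt = (Γ(z+1/2)/(2z·√π))·Σ_n sgn(λ_n)·|λ_n|^{−2z}. -/

import Mathlib

open MeasureTheory Real Set

/-- A sequence `(λ_n)` of real numbers satisfies a Weyl-type counting bound of order `m`
if there is a constant `C > 0` such that for every `T ≥ 0` the set `{n : |λ_n| ≤ T}` is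
finite with cardinality at most `C·(1+T)^m`. -/
def WeylBound (lam : ℕ → ℝ) (m : ℕ) : Prop :=
  ∃ C > (0 : ℝ), ∀ T : ℝ, 0 ≤ T →
    {n : ℕ | |lam n| ≤ T}.Finite ∧ ({n : ℕ | |lam n| ≤ T}.ncard : ℝ) ≤ C * (1 + T) ^ m

/-- The complementary error function `erfc(x) = (2/√π) ∫_x^∞ exp(−ξ²) dξ`. -/
noncomputable def erfc (x : ℝ) : ℝ :=
  (2 / Real.sqrt π) * ∫ ξ in Ioi x, Real.exp (-ξ ^ 2)

/-!
Each summand has an explicit Mellin transform: integrating by parts against `d(t^z / z)`,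
and using `d/dt erfc (a √t) = -(a / √π) e^{-a² t} / √t`, gives
`∫₀^∞ erfc (a √t) t^(z-1) dt = Γ(z + 1/2) a^(-2z) / (z √π)`.
Applied at `Re z`, the same formula shows that the `L¹(t^(Re z - 1) dt)` norm of the `n`-th
summand is a constant times `|λ_n|^(-2 Re z)`; counting the `λ_n` in dyadic shells shows that the Weyl bound of order `m`
makes these summable as soon as `2 Re z > m`. The series therefore converges in `L¹` and can be
integrated term by term.
-/

open Filter Topology

lemma Real.abs_sign_le_one (r : ℝ) : |Real.sign r| ≤ 1 := by
  rcases Real.sign_apply_eq r with h | h | h <;> simp [h]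

namespace WeylBound

variable {lam : ℕ → ℝ} {m : ℕ}

lemma tendsto_abs_cofinite (hW : WeylBound lam m) :
    Tendsto (fun n ↦ |lam n|) cofinite atTop := by
  obtain ⟨C, -, hcount⟩ := hW
  refine tendsto_atTop.2 fun b ↦ eventually_cofinite.2 ?_
  exact (hcount (max b 0) (le_max_right _ _)).1.subset
    fun n hn ↦ (not_le.1 hn).le.trans (le_max_left _ _)

lemma exists_pos_le_abs (hlam : ∀ n, lam n ≠ 0) (hW : WeylBound lam m) :
    ∃ δ > 0, δ ≤ 1 ∧ ∀ n, δ ≤ |lam n| := by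
  obtain ⟨n₀, hn₀⟩ := hW.tendsto_abs_cofinite.exists_forall_le
  exact ⟨min 1 |lam n₀|, lt_min one_pos (abs_pos.2 (hlam n₀)), min_le_left _ _,
    fun n ↦ (min_le_right _ _).trans (hn₀ n)⟩

theorem summable_abs_rpow_neg (hlam : ∀ n, lam n ≠ 0) (hW : WeylBound lam m) {s : ℝ}
    (hs : (m : ℝ) < s) : Summable fun n ↦ |lam n| ^ (-s) := by
  obtain ⟨δ, hδ, hδ1, hδle⟩ := hW.exists_pos_le_abs hlam
  obtain ⟨C, hC, hcount⟩ := hW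
  have hshell : ∀ n, ∃ j : ℕ, δ * 2 ^ j ≤ |lam n| ∧ |lam n| < δ * 2 ^ (j + 1) := fun n ↦ by
    obtain ⟨j, hj⟩ := exists_nat_pow_near ((one_le_div hδ).2 (hδle n)) one_lt_two
    exact ⟨j, by rwa [le_div_iff₀' hδ, div_lt_iff₀' hδ] at hj⟩
  choose k hk using hshell
  set r : ℝ := 2 ^ ((m : ℝ) - s)
  have hr : r < 1 := rpow_lt_one_of_one_lt_of_neg one_lt_two (by linarith)
  set D : ℝ := C * 3 ^ m * δ ^ (-s)
  -- The shell `δ 2^j ≤ |λ_n| < δ 2^(j+1)` has at most `C (3 · 2^j)^m` elements, each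
  -- contributing at most `(δ 2^j)^(-s)`.
  have hfiber : ∀ (u : Finset ℕ) (j : ℕ),
      ∑ n ∈ u with k n = j, |lam n| ^ (-s) ≤ D * r ^ j := fun u j ↦ by
    have h2j : (0 : ℝ) < 2 ^ j := by positivity
    have hterm : ∀ n ∈ u.filter (fun n ↦ k n = j),
        |lam n| ^ (-s) ≤ (δ * 2 ^ j) ^ (-s) := fun n hn ↦ by
      obtain ⟨-, rfl⟩ := Finset.mem_filter.1 hn
      exact rpow_le_rpow_of_nonpos (by positivity) (hk n).1
        (by linarith [m.cast_nonneg (α := ℝ)])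
    have hcard : ((u.filter fun n ↦ k n = j).card : ℝ) ≤ C * (3 * 2 ^ j) ^ m := by
      have hT := hcount (δ * 2 ^ (j + 1)) (by positivity)
      have hsub : ((u.filter fun n ↦ k n = j) : Set ℕ) ⊆ {n | |lam n| ≤ δ * 2 ^ (j + 1)} := by
        intro n hn
        obtain ⟨-, rfl⟩ := Finset.mem_filter.1 hn
        exact (hk n).2.le
      calc ((u.filter fun n ↦ k n = j).card : ℝ)
          ≤ {n | |lam n| ≤ δ * 2 ^ (j + 1)}.ncard := by
            exact_mod_cast Set.ncard_coe_finset _ ▸ Set.ncard_le_ncard hsub hT.1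
        _ ≤ C * (1 + δ * 2 ^ (j + 1)) ^ m := hT.2
        _ ≤ C * (3 * 2 ^ j) ^ m := by
            gcongr
            have : (1 : ℝ) ≤ 2 ^ j := one_le_pow₀ one_le_two
            rw [pow_succ]
            nlinarith [mul_le_mul_of_nonneg_right hδ1 h2j.le]
    have hgeom : ((2 : ℝ) ^ j) ^ m * ((2 : ℝ) ^ j) ^ (-s) = r ^ j := by
      rw [show r ^ j = ((2 : ℝ) ^ ((m : ℝ) - s)) ^ j from rfl, ← rpow_natCast (2 : ℝ) j,
        ← rpow_mul_natCast zero_le_two, ← rpow_mul zero_le_two, ← rpow_add two_pos,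
        ← rpow_mul_natCast zero_le_two]
      ring_nf
    calc ∑ n ∈ u with k n = j, |lam n| ^ (-s)
        ≤ (u.filter fun n ↦ k n = j).card * (δ * 2 ^ j) ^ (-s) := by
          simpa using Finset.sum_le_sum hterm
      _ ≤ C * (3 * 2 ^ j) ^ m * (δ * 2 ^ j) ^ (-s) := by gcongr
      _ = D * r ^ j := by rw [mul_pow, mul_rpow hδ.le h2j.le, ← hgeom]; ring
  refine summable_of_sum_le (c := D * ∑' j : ℕ, r ^ j) (fun n ↦ by positivity) fun u ↦ ?_
  rw [← Finset.sum_fiberwise_of_maps_to fun n hn ↦ Finset.mem_image_of_mem k hn]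
  calc ∑ j ∈ u.image k, ∑ n ∈ u with k n = j, |lam n| ^ (-s)
      ≤ ∑ j ∈ u.image k, D * r ^ j := Finset.sum_le_sum fun j _ ↦ hfiber u j
    _ ≤ D * ∑' j : ℕ, r ^ j := by
        rw [← Finset.mul_sum]
        gcongr
        exact (summable_geometric_of_lt_one (by positivity) hr).sum_le_tsum _
          fun _ _ ↦ by positivity

end WeylBound

namespace MeasureTheory

variable {α E : Type*} [MeasurableSpace α] {μ : Measure α} [NormedAddCommGroup E]
  [CompleteSpace E] {ι : Type*} [Countable ι]

theorem integrable_tsum_of_summable_integral_norm {F : ι → α → E}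
    (hF_int : ∀ i, Integrable (F i) μ) (hF_sum : Summable fun i ↦ ∫ a, ‖F i a‖ ∂μ) :
    Integrable (fun a ↦ ∑' i, F i a) μ := by
  have hL1 : ∑' i, ‖(hF_int i).toL1 (F i)‖ₑ ≠ ⊤ := by
    simp_rw [Integrable.enorm_toL1, ← ofReal_integral_norm_eq_lintegral_enorm (hF_int _)]
    rw [← ENNReal.ofReal_tsum_of_nonneg (fun i ↦ integral_nonneg fun _ ↦ norm_nonneg _) hF_sum]
    exact ENNReal.ofReal_ne_top
  refine (L1.integrable_coeFn (∑' i, (hF_int i).toL1 (F i))).congr ?_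
  filter_upwards [Lp.hasSum_coeFn_tsum hL1, ae_all_iff.2 fun i ↦ (hF_int i).coeFn_toL1]
    with a hsum hcoe
  simp only [hcoe] at hsum
  exact hsum.tsum_eq.symm

end MeasureTheory

open MeasureTheory

theorem hasMellin_tsum {E : Type*} [NormedAddCommGroup E] [NormedSpace ℂ E] [CompleteSpace E]
    {ι : Type*} [Countable ι] {f : ι → ℝ → E} {s : ℂ} (hf : ∀ i, MellinConvergent (f i) s)
    (hsum : Summable fun i ↦ ∫ t in Ioi (0 : ℝ), ‖(t : ℂ) ^ (s - 1) • f i t‖) :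
    HasMellin (fun t ↦ ∑' i, f i t) s (∑' i, mellin (f i) s) := by
  refine ⟨?_, ?_⟩
  · simp_rw [MellinConvergent, ← tsum_const_smul'']
    exact integrable_tsum_of_summable_integral_norm hf hsum
  · simp_rw [mellin, ← tsum_const_smul'']
    exact (integral_tsum_of_summable_integral_norm hf hsum).symm

lemma integrable_exp_neg_sq : Integrable fun ξ : ℝ ↦ exp (-ξ ^ 2) := by
  simpa using integrable_exp_neg_mul_sq one_pos

lemma erfc_nonneg (x : ℝ) : 0 ≤ erfc x :=
  mul_nonneg (by positivity) (setIntegral_nonneg measurableSet_Ioi fun _ _ ↦ (exp_pos _).le)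

lemma hasDerivAt_erfc (x : ℝ) : HasDerivAt erfc (-(2 / √π * exp (-x ^ 2))) x := by
  have hcont : Continuous fun ξ : ℝ ↦ exp (-ξ ^ 2) := by fun_prop
  have hsplit : erfc = fun y ↦
      2 / √π * ((∫ ξ in Ioi 0, exp (-ξ ^ 2)) - ∫ ξ in (0 : ℝ)..y, exp (-ξ ^ 2)) := by
    ext y
    rw [erfc, ← intervalIntegral.integral_Ioi_sub_Ioi' integrable_exp_neg_sq.integrableOn
      integrable_exp_neg_sq.integrableOn, sub_sub_cancel]
  rw [hsplit]
  exact ((hcont.integral_hasStrictDerivAt 0 x).hasDerivAt.const_sub _).const_mul _ |>.congr_deriv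
    (by ring)

lemma continuous_erfc : Continuous erfc :=
  continuous_iff_continuousAt.2 fun x ↦ (hasDerivAt_erfc x).continuousAt

lemma erfc_le_two_mul_exp {x : ℝ} (hx : 0 ≤ x) : erfc x ≤ 2 * exp (-x ^ 2) := by
  have hshift : Integrable fun ξ : ℝ ↦ exp (-(ξ - x) ^ 2) :=
    integrable_exp_neg_sq.comp_sub_right x
  have hbound : ∫ ξ in Ioi x, exp (-ξ ^ 2) ≤ exp (-x ^ 2) * √π := by
    calc ∫ ξ in Ioi x, exp (-ξ ^ 2)
        ≤ ∫ ξ in Ioi x, exp (-x ^ 2) * exp (-(ξ - x) ^ 2) := by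
          refine setIntegral_mono_on integrable_exp_neg_sq.integrableOn
            (hshift.const_mul _).integrableOn measurableSet_Ioi fun ξ hξ ↦ ?_
          -- `ξ² ≥ x² + (ξ - x)²` for `ξ ≥ x ≥ 0`
          rw [← exp_add, exp_le_exp]
          nlinarith [mem_Ioi.1 hξ]
      _ ≤ ∫ ξ, exp (-x ^ 2) * exp (-(ξ - x) ^ 2) :=
          setIntegral_le_integral (hshift.const_mul _) (.of_forall fun _ ↦ by positivity)
      _ = exp (-x ^ 2) * √π := by
          have hgauss := integral_gaussian 1
          simp only [neg_mul, one_mul, div_one] at hgauss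
          rw [integral_const_mul, integral_sub_right_eq_self (fun ξ ↦ exp (-ξ ^ 2)), hgauss]
  calc erfc x ≤ 2 / √π * (exp (-x ^ 2) * √π) :=
        mul_le_mul_of_nonneg_left hbound (by positivity)
    _ = 2 * exp (-x ^ 2) := by field_simp

lemma hasDerivAt_erfc_sqrt {t : ℝ} (ht : 0 < t) :
    HasDerivAt (fun s ↦ erfc √s) (-(exp (-t) / (√π * √t))) t := by
  refine ((hasDerivAt_erfc √t).comp t (hasDerivAt_sqrt ht.ne')).congr_deriv ?_
  have : √t ≠ 0 := (sqrt_pos.2 ht).ne'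
  rw [sq_sqrt ht.le]
  field_simp

lemma norm_erfc_sqrt_mul_cpow_le {t : ℝ} (ht : 0 < t) (w : ℂ) :
    ‖(erfc √t : ℂ) * (t : ℂ) ^ w‖ ≤ 2 * (exp (-t) * t ^ w.re) := by
  rw [norm_mul, Complex.norm_real, norm_of_nonneg (erfc_nonneg _),
    Complex.norm_cpow_eq_rpow_re_of_pos ht, ← mul_assoc]
  gcongr
  simpa [sq_sqrt ht.le] using erfc_le_two_mul_exp (sqrt_nonneg t)

lemma tendsto_erfc_sqrt_mul_cpow_nhdsGT_zero {z : ℂ} (hz : 0 < z.re) :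
    Tendsto (fun t : ℝ ↦ (erfc √t : ℂ) * (t : ℂ) ^ z) (𝓝[>] 0) (𝓝 0) := by
  refine squeeze_zero_norm'
    (eventually_nhdsWithin_of_forall fun t ht ↦ norm_erfc_sqrt_mul_cpow_le ht z) ?_
  have hcont : ContinuousAt (fun t : ℝ ↦ 2 * (exp (-t) * t ^ z.re)) 0 :=
    continuousAt_const.mul ((continuous_exp.comp continuous_neg).continuousAt.mul
      (continuousAt_rpow_const 0 z.re (Or.inr hz.le)))
  simpa [zero_rpow hz.ne'] using hcont.tendsto.mono_left nhdsWithin_le_nhds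

lemma tendsto_erfc_sqrt_mul_cpow_atTop (z : ℂ) :
    Tendsto (fun t : ℝ ↦ (erfc √t : ℂ) * (t : ℂ) ^ z) atTop (𝓝 0) := by
  refine squeeze_zero_norm'
    ((eventually_gt_atTop 0).mono fun t ht ↦ norm_erfc_sqrt_mul_cpow_le ht z) ?_
  simpa [mul_comm (exp _)] using
    (tendsto_rpow_mul_exp_neg_mul_atTop_nhds_zero z.re 1 one_pos).const_mul 2

lemma cpow_add_half_sub_one_eq_div_sqrt {t : ℝ} (ht : 0 < t) (z : ℂ) :
    (t : ℂ) ^ (z + 1 / 2 - 1) = (t : ℂ) ^ z / (√t : ℝ) := by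
  rw [sqrt_eq_rpow, Complex.ofReal_cpow ht.le,
    ← Complex.cpow_sub _ _ (Complex.ofReal_ne_zero.2 ht.ne')]
  push_cast
  ring_nf

lemma hasMellin_erfc_sqrt {z : ℂ} (hz : 0 < z.re) :
    HasMellin (fun t ↦ (erfc √t : ℂ)) z (Complex.Gamma (z + 1 / 2) / (z * √π)) := by
  have hz0 : z ≠ 0 := fun h ↦ by simp [h] at hz
  set u : ℝ → ℂ := fun t ↦ (erfc √t : ℂ)
  set u' : ℝ → ℂ := fun t ↦ ((-(exp (-t) / (√π * √t)) : ℝ) : ℂ)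
  set v : ℝ → ℂ := fun t ↦ (t : ℂ) ^ z / z
  set v' : ℝ → ℂ := fun t ↦ (t : ℂ) ^ (z - 1)
  have hu : ∀ t ∈ Ioi (0 : ℝ), HasDerivAt u (u' t) t := fun t ht ↦
    (hasDerivAt_erfc_sqrt ht).ofReal_comp
  have hv : ∀ t ∈ Ioi (0 : ℝ), HasDerivAt v (v' t) t := fun t ht ↦ by
    simpa using hasDerivAt_ofReal_cpow_const' (ne_of_gt ht) (by simpa using hz0 : z - 1 ≠ -1)
  have hu'v_eq : ∀ t ∈ Ioi (0 : ℝ),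
      u' t * v t = -(1 / (z * √π)) * (exp (-t) * (t : ℂ) ^ (z + 1 / 2 - 1)) := fun t ht ↦ by
    have : ((√t : ℝ) : ℂ) ≠ 0 := by exact_mod_cast (sqrt_pos.2 (mem_Ioi.1 ht)).ne'
    have : ((√π : ℝ) : ℂ) ≠ 0 := by exact_mod_cast (sqrt_pos.2 pi_pos).ne'
    simp only [u', v, cpow_add_half_sub_one_eq_div_sqrt (mem_Ioi.1 ht)]
    push_cast
    field_simp
  have huv : u * v = fun t ↦ (erfc √t : ℂ) * (t : ℂ) ^ z / z :=
    funext fun t ↦ (mul_div_assoc _ _ _).symm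
  have huv' : IntegrableOn (u * v') (Ioi 0) := by
    refine Integrable.mono' ((Real.GammaIntegral_convergent hz).const_mul 2) ?_ ?_
    · exact (Complex.continuous_ofReal.comp (continuous_erfc.comp continuous_sqrt)
        ).aestronglyMeasurable.mul (by fun_prop : Measurable v').aestronglyMeasurable
    · filter_upwards [ae_restrict_mem measurableSet_Ioi] with t ht
      simpa [u, v'] using norm_erfc_sqrt_mul_cpow_le ht (z - 1)
  have hu'v : IntegrableOn (u' * v) (Ioi 0) :=
    IntegrableOn.congr_fun
      ((Complex.GammaIntegral_convergent (by simp; linarith)).const_mul (-(1 / (z * √π))))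
      (fun t ht ↦ (hu'v_eq t ht).symm) measurableSet_Ioi
  have h_zero : Tendsto (u * v) (𝓝[>] 0) (𝓝 0) := by
    simpa [huv] using (tendsto_erfc_sqrt_mul_cpow_nhdsGT_zero hz).div_const z
  have h_infty : Tendsto (u * v) atTop (𝓝 0) := by
    simpa [huv] using (tendsto_erfc_sqrt_mul_cpow_atTop z).div_const z
  have hmul : (fun t : ℝ ↦ (t : ℂ) ^ (z - 1) • u t) = u * v' :=
    funext fun t ↦ (smul_eq_mul _ _).trans (mul_comm _ _)
  refine ⟨by rw [MellinConvergent, hmul]; exact huv', ?_⟩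
  rw [mellin, hmul, Pi.mul_def, integral_Ioi_mul_deriv_eq_deriv_mul hu hv huv' hu'v h_zero h_infty,
    setIntegral_congr_fun measurableSet_Ioi hu'v_eq, integral_const_mul, ← Complex.GammaIntegral,
    ← Complex.Gamma_eq_integral (by simp; linarith)]
  ring

lemma hasMellin_erfc_mul_sqrt {a : ℝ} (ha : 0 < a) {z : ℂ} (hz : 0 < z.re) :
    HasMellin (fun t ↦ (erfc (a * √t) : ℂ)) z
      ((a : ℂ) ^ (-(2 * z)) * (Complex.Gamma (z + 1 / 2) / (z * √π))) := by
  have ha2 : 0 < a ^ 2 := by positivity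
  have hfun : (fun t ↦ (erfc (a * √t) : ℂ)) = fun t ↦ (erfc √(a ^ 2 * t) : ℂ) := by
    ext t
    rw [sqrt_mul ha2.le, sqrt_sq ha.le]
  have harg : (a : ℂ).arg = 0 := Complex.arg_ofReal_of_nonneg ha.le
  obtain ⟨hconv, hval⟩ := hasMellin_erfc_sqrt hz
  refine ⟨hfun ▸ (MellinConvergent.comp_mul_left ha2).2 hconv, ?_⟩
  rw [hfun, mellin_comp_mul_left (fun t ↦ (erfc √t : ℂ)) _ ha2, hval, smul_eq_mul,
    neg_mul_eq_mul_neg,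
    Complex.cpow_ofNat_mul' (by simp [harg, pi_pos]) (by simp [harg, pi_pos.le])]
  push_cast
  rfl

lemma integral_norm_cpow_smul_erfc_mul_sqrt {a : ℝ} (ha : 0 < a) {z : ℂ} (hz : 0 < z.re) :
    ∫ t in Ioi (0 : ℝ), ‖(t : ℂ) ^ (z - 1) • (erfc (a * √t) : ℂ)‖
      = a ^ (-(2 * z.re)) * ‖Complex.Gamma (z.re + 1 / 2) / (z.re * √π)‖ := by
  have hre : ∀ t ∈ Ioi (0 : ℝ), (t : ℂ) ^ ((z.re : ℂ) - 1) • (erfc (a * √t) : ℂ)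
      = ((‖(t : ℂ) ^ (z - 1) • (erfc (a * √t) : ℂ)‖ : ℝ) : ℂ) := fun t ht ↦ by
    rw [norm_smul, Complex.norm_cpow_eq_rpow_re_of_pos ht, Complex.norm_real,
      norm_of_nonneg (erfc_nonneg _), smul_eq_mul, Complex.ofReal_mul,
      Complex.ofReal_cpow (le_of_lt ht)]
    simp
  have hval := (hasMellin_erfc_mul_sqrt ha (z := z.re) (by simpa using hz)).2
  rw [mellin, setIntegral_congr_fun measurableSet_Ioi hre, integral_complex_ofReal] at hval
  have hnorm := congrArg norm hval
  rw [Complex.norm_real, norm_of_nonneg (integral_nonneg fun _ ↦ norm_nonneg _), norm_mul,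
    Complex.norm_cpow_eq_rpow_re_of_pos ha] at hnorm
  simpa using hnorm

lemma summable_integral_norm_cpow_smul_erfc {lam : ℕ → ℝ} {m : ℕ} {c : ℕ → ℝ}
    (hc : ∀ n, |c n| ≤ 1) (hlam : ∀ n, lam n ≠ 0) (hW : WeylBound lam m) {z : ℂ}
    (hz : (m : ℝ) / 2 < z.re) :
    Summable fun n ↦
      ∫ t in Ioi (0 : ℝ), ‖(t : ℂ) ^ (z - 1) • ((c n * erfc (|lam n| * √t) : ℝ) : ℂ)‖ := by
  have hz0 : 0 < z.re := lt_of_le_of_lt (by positivity) hz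
  set K := ‖Complex.Gamma (z.re + 1 / 2) / (z.re * √π)‖
  have hnorm n : ∫ t in Ioi (0 : ℝ), ‖(t : ℂ) ^ (z - 1) • ((c n * erfc (|lam n| * √t) : ℝ) : ℂ)‖
      = |c n| * (|lam n| ^ (-(2 * z.re)) * K) := by
    rw [← integral_norm_cpow_smul_erfc_mul_sqrt (abs_pos.2 (hlam n)) hz0, ← integral_const_mul]
    congr 1 with t
    simp only [Complex.ofReal_mul, smul_eq_mul, norm_mul, Complex.norm_real, norm_eq_abs]
    ring
  refine Summable.of_nonneg_of_le (fun n ↦ integral_nonneg fun _ ↦ norm_nonneg _)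
    (fun n ↦ (hnorm n).trans_le (mul_le_of_le_one_left (by positivity) (hc n)))
    ((hW.summable_abs_rpow_neg hlam (by linarith)).mul_right K)

theorem stmt_10_general (m : ℕ) (lam : ℕ → ℝ) (hlam : ∀ n, lam n ≠ 0)
    (hW : WeylBound lam m) (z : ℂ) (hz : (m : ℝ) / 2 < z.re) :
    IntegrableOn
      (fun t : ℝ => ((∑' n : ℕ, (Real.sign (lam n) / 2) * erfc (|lam n| * Real.sqrt t) : ℝ) : ℂ)
        * (t : ℂ) ^ (z - 1)) (Ioi 0) volume ∧
    ∫ t in Ioi (0 : ℝ),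
        ((∑' n : ℕ, (Real.sign (lam n) / 2) * erfc (|lam n| * Real.sqrt t) : ℝ) : ℂ)
          * (t : ℂ) ^ (z - 1)
      = (Complex.Gamma (z + 1/2) / (2 * z * Real.sqrt π))
          * ∑' n : ℕ, (Real.sign (lam n) : ℂ) * ((|lam n| : ℝ) : ℂ) ^ (-(2 * z)) := by
  have hz0 : 0 < z.re := lt_of_le_of_lt (by positivity) hz
  set c : ℕ → ℝ := fun n ↦ Real.sign (lam n) / 2
  set g : ℕ → ℝ → ℂ := fun n t ↦ ((c n * erfc (|lam n| * √t) : ℝ) : ℂ)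
  have hg n : HasMellin (g n) z
      (c n * (((|lam n| : ℝ) : ℂ) ^ (-(2 * z)) * (Complex.Gamma (z + 1 / 2) / (z * √π)))) := by
    obtain ⟨hconv, hval⟩ := hasMellin_erfc_mul_sqrt (abs_pos.2 (hlam n)) hz0
    simpa [g, hval] using hasMellin_const_smul hconv (c n : ℂ)
  have hc n : |c n| ≤ 1 := by
    simp only [c, abs_div, abs_two]
    linarith [Real.abs_sign_le_one (lam n)]
  obtain ⟨hconv, hval⟩ := hasMellin_tsum (fun n ↦ (hg n).1)
    (summable_integral_norm_cpow_smul_erfc hc hlam hW hz)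
  have hF : (fun t : ℝ ↦ ((∑' n, c n * erfc (|lam n| * √t) : ℝ) : ℂ) * (t : ℂ) ^ (z - 1))
      = fun t : ℝ ↦ (t : ℂ) ^ (z - 1) • ∑' n, g n t := by
    ext t
    rw [Complex.ofReal_tsum, smul_eq_mul, mul_comm]
  refine ⟨hF ▸ hconv, ?_⟩
  rw [hF, ← mellin, hval, tsum_congr fun n ↦ (hg n).2, ← tsum_mul_left]
  refine tsum_congr fun n ↦ ?_
  simp only [c]
  push_cast
  ring

/-- The series form of the APS identity for the cylinder contribution:
`∫₀^∞ (Σ (sgn λ_n/2)·erfc(|λ_n|√t))·t^{z−1} dt = (Γ(z+1/2)/(2z√π))·Σ sgn(λ_n)|λ_n|^{−2z}`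
for `Re z > m/2`. -/
theorem stmt_10 (m : ℕ) (hm : 0 < m) (lam : ℕ → ℝ) (hlam : ∀ n, lam n ≠ 0)
    (hW : WeylBound lam m) (z : ℂ) (hz : (m : ℝ) / 2 < z.re) :
    IntegrableOn
      (fun t : ℝ => ((∑' n : ℕ, (Real.sign (lam n) / 2) * erfc (|lam n| * Real.sqrt t) : ℝ) : ℂ)
        * (t : ℂ) ^ (z - 1)) (Ioi 0) volume ∧
    ∫ t in Ioi (0 : ℝ),
        ((∑' n : ℕ, (Real.sign (lam n) / 2) * erfc (|lam n| * Real.sqrt t) : ℝ) : ℂ)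
          * (t : ℂ) ^ (z - 1)
      = (Complex.Gamma (z + 1/2) / (2 * z * Real.sqrt π))
          * ∑' n : ℕ, (Real.sign (lam n) : ℂ) * ((|lam n| : ℝ) : ℂ) ^ (-(2 * z)) :=
  stmt_10_general m lam hlam hW z hz
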